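/- arXiv:1709.04161 — 3 statements merged into one kernel-verified Lean document; each statement's English description precedes it below -/
import Mathlib

section
/- Let m ≥ 1, let x : Fin m → ℕ satisfy x j ≥ 1 for all j, and let z : ℕ satisfy ∑ j, x j = 2·z. Consider the m+1 jobs indexed by Fin m ⊕ Unit with processing times p (inl j) = x j and p (inr) = 1. Then there exists a subset S ⊆ Fin m with ∑_{j ∈ S} x j = z if and only if there exists a schedule σ of these m+1 jobs such that ∑ j, x j · C (inl j) ≤ z + ∑ i, ∑_{j ≤ i} x i · x j and C (inr) = z + 1. -/
/-!
If the extra unit job is preceded exactly by the jobs of `S`, it completes at `x(S) + 1`, so the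
just-in-time condition says precisely that `x(S) = z`. Whatever the schedule, the weighted
completion time of the other jobs is `x(complement of S)` plus `∑ x_i x_j` over the pairs with `j`
not after `i`; the latter does not depend on the order, since twice it equals
`(∑ x_i)² + ∑ x_i²`. Hence under `x(S) = z = x(complement of S)` the weight bound holds.
-/

/-- The completion time of job `i` in the schedule `σ` (a bijection from jobs to
positions) with processing times `p`: the sum of processing times of all jobs
scheduled at position at most the position of `i`. -/
def completionTime {ι : Type*} [Fintype ι] (p : ι → ℕ)
    (σ : ι ≃ Fin (Fintype.card ι)) (i : ι) : ℕ :=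
  ∑ j ∈ Finset.univ.filter (fun j => σ j ≤ σ i), p j

open Finset

theorem exists_equiv_fin_le_iff_of_injective {ι α : Type*} [Fintype ι] [LinearOrder α]
    (f : ι → α) (hf : Function.Injective f) :
    ∃ σ : ι ≃ Fin (Fintype.card ι), ∀ i j, σ i ≤ σ j ↔ f i ≤ f j := by
  let : LinearOrder ι := LinearOrder.lift' f hf
  exact ⟨(Fintype.orderIsoFinOfCardEq ι rfl).symm.toEquiv,
    fun i j => (Fintype.orderIsoFinOfCardEq ι rfl).symm.le_iff_le⟩

theorem two_mul_sum_sum_filter_le_eq {ι α R : Type*} [Fintype ι] [LinearOrder α]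
    [CommSemiring R] (x : ι → R) (f : ι → α) (hf : Function.Injective f) :
    2 * ∑ i, ∑ j ∈ univ.filter (fun j => f j ≤ f i), x i * x j
      = (∑ i, x i) ^ 2 + ∑ i, x i ^ 2 := by
  classical
  have pair : ∀ i j, (if f j ≤ f i then x i * x j else 0) + (if f i ≤ f j then x i * x j else 0)
      = x i * x j + if i = j then x i * x j else 0 := by
    intro i j
    rcases lt_trichotomy (f i) (f j) with h | h | h
    · simp [h.le, h.not_ge, hf.ne_iff.mp h.ne]
    · simp [hf h]
    · simp [h.le, h.not_ge, hf.ne_iff.mp h.ne']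
  have swap : ∑ i, ∑ j, (if f i ≤ f j then x i * x j else 0)
      = ∑ i, ∑ j, (if f j ≤ f i then x i * x j else 0) := by
    rw [sum_comm]
    simp only [mul_comm]
  calc 2 * ∑ i, ∑ j ∈ univ.filter (fun j => f j ≤ f i), x i * x j
      = ∑ i, ∑ j, ((if f j ≤ f i then x i * x j else 0)
          + if f i ≤ f j then x i * x j else 0) := by
        simp only [sum_filter, sum_add_distrib, swap, two_mul]
    _ = (∑ i, x i) ^ 2 + ∑ i, x i ^ 2 := by
        simp only [pair, sum_add_distrib, sum_ite_eq, mem_univ, if_true, sq, sum_mul_sum]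

theorem sum_sum_filter_le_eq_of_injective {ι α β : Type*} [Fintype ι] [LinearOrder α]
    [LinearOrder β] (x : ι → ℕ) {f : ι → α} {g : ι → β} (hf : Function.Injective f)
    (hg : Function.Injective g) :
    ∑ i, ∑ j ∈ univ.filter (fun j => f j ≤ f i), x i * x j
      = ∑ i, ∑ j ∈ univ.filter (fun j => g j ≤ g i), x i * x j := by
  have hf2 := two_mul_sum_sum_filter_le_eq x f hf
  have hg2 := two_mul_sum_sum_filter_le_eq x g hg
  omega

theorem completionTime_sum_elim {ι κ : Type*} [Fintype ι] [Fintype κ] (p : ι → ℕ) (q : κ → ℕ)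
    (σ : ι ⊕ κ ≃ Fin (Fintype.card (ι ⊕ κ))) (k : ι ⊕ κ) :
    completionTime (Sum.elim p q) σ k
      = ∑ i ∈ univ.filter (fun i => σ (.inl i) ≤ σ k), p i
        + ∑ j ∈ univ.filter (fun j => σ (.inr j) ≤ σ k), q j := by
  simp only [completionTime, sum_filter, Fintype.sum_sum_type, Sum.elim_inl, Sum.elim_inr]

section OneExtraJob

variable {ι : Type*} [Fintype ι] (x : ι → ℕ) (σ : ι ⊕ Unit ≃ Fin (Fintype.card (ι ⊕ Unit)))

theorem completionTime_inr_unit :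
    completionTime (Sum.elim x fun _ => 1) σ (.inr ())
      = ∑ i ∈ univ.filter (fun i => σ (.inl i) ≤ σ (.inr ())), x i + 1 := by
  simp [completionTime_sum_elim]

theorem sum_mul_completionTime_inl {α : Type*} [LinearOrder α] {f : ι → α}
    (hf : Function.Injective f) :
    ∑ i, x i * completionTime (Sum.elim x fun _ => 1) σ (.inl i)
      = ∑ i, ∑ j ∈ univ.filter (fun j => f j ≤ f i), x i * x j
        + ∑ i ∈ univ.filter (fun i => σ (.inr ()) < σ (.inl i)), x i := by
  have hσ : Function.Injective fun i => σ (.inl i) := σ.injective.comp Sum.inl_injective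
  have after : ∀ i, σ (.inr ()) ≤ σ (.inl i) ↔ σ (.inr ()) < σ (.inl i) := fun i =>
    (σ.injective.ne Sum.inr_ne_inl).le_iff_lt
  rw [← sum_sum_filter_le_eq_of_injective x hσ hf]
  simp only [completionTime_sum_elim, sum_filter, mul_add, sum_add_distrib]
  simp [mul_sum, after]

end OneExtraJob

theorem exists_schedule_filter_le_inr_eq {ι : Type*} [Fintype ι] (S : Finset ι) :
    ∃ σ : ι ⊕ Unit ≃ Fin (Fintype.card (ι ⊕ Unit)),
      univ.filter (fun i => σ (.inl i) ≤ σ (.inr ())) = S := by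
  classical
  -- schedule `S`, then the extra job, then the rest
  let e := Fintype.equivFin ι
  let key : ι ⊕ Unit → ℕ ×ₗ ℕ :=
    Sum.elim (fun i => toLex (if i ∈ S then 0 else 2, (e i : ℕ))) fun _ => toLex (1, 0)
  have hkey : Function.Injective key := by
    rintro (i | _) (j | _) h <;> simp only [key, Sum.elim_inl, Sum.elim_inr, toLex_inj,
      Prod.mk.injEq] at h
    · exact congrArg _ (e.injective (Fin.ext h.2))
    · split_ifs at h <;> simp at h
    · split_ifs at h <;> simp at h
    · rfl
  obtain ⟨σ, hσ⟩ := exists_equiv_fin_le_iff_of_injective key hkey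
  refine ⟨σ, ?_⟩
  ext i
  by_cases hi : i ∈ S <;> simp [hσ, key, hi, Prod.Lex.toLex_le_toLex]

theorem partition_reduction_jit_completion_general
    (m : ℕ) (x : Fin m → ℕ)
    (z : ℕ) (hsum : ∑ j, x j = 2 * z) :
    (∃ S : Finset (Fin m), ∑ j ∈ S, x j = z) ↔
    (∃ σ : (Fin m ⊕ Unit) ≃ Fin (Fintype.card (Fin m ⊕ Unit)),
      (∑ i, x i * completionTime (Sum.elim x fun _ => 1) σ (Sum.inl i)
          ≤ z + ∑ i, ∑ j ∈ Finset.Iic i, x i * x j) ∧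
      completionTime (Sum.elim x fun _ => 1) σ (Sum.inr ()) = z + 1) := by
  have weighted := fun σ => sum_mul_completionTime_inl x σ (f := id) Function.injective_id
  simp only [id, filter_ge_eq_Iic] at weighted
  constructor
  · rintro ⟨S, hS⟩
    obtain ⟨σ, hσ⟩ := exists_schedule_filter_le_inr_eq S
    have split := sum_filter_add_sum_filter_not univ (fun i => σ (.inl i) ≤ σ (.inr ())) x
    simp only [not_le, hσ, hS] at split
    refine ⟨σ, ?_, by rw [completionTime_inr_unit, hσ, hS]⟩
    rw [weighted]
    omega
  · rintro ⟨σ, -, hinr⟩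
    exact ⟨_, Nat.add_right_cancel ((completionTime_inr_unit x σ).symm.trans hinr)⟩

/-- Correctness of the Partition reduction for
`1 | ∑ w_j C_j^{(1)} ≤ A₁, ∑ E_j^{(2)} ≥ A₂ |` with a single agent-2 job. -/
theorem partition_reduction_jit_completion
    (m : ℕ) (hm : 1 ≤ m) (x : Fin m → ℕ) (hx : ∀ j, 1 ≤ x j)
    (z : ℕ) (hsum : ∑ j, x j = 2 * z) :
    (∃ S : Finset (Fin m), ∑ j ∈ S, x j = z) ↔
    (∃ σ : (Fin m ⊕ Unit) ≃ Fin (Fintype.card (Fin m ⊕ Unit)),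
      (∑ i, x i * completionTime (Sum.elim x fun _ => 1) σ (Sum.inl i)
          ≤ z + ∑ i, ∑ j ∈ Finset.Iic i, x i * x j) ∧
      completionTime (Sum.elim x fun _ => 1) σ (Sum.inr ()) = z + 1) :=
  partition_reduction_jit_completion_general m x z hsum
end

section
/- Let p₂ : Fin k → ℕ and w₂ : Fin k → ℕ, and let x : Fin k → ℕ satisfy x j ≤ n for all j. In any schedule σ of the jobs Fin n ⊕ Fin k in which every agent-1 job has processing time 1, the agent-2 jobs appear in index order, and for each j exactly x j agent-1 jobs are scheduled after agent-2 job j, the total weighted completion time of the agent-2 jobs satisfies ∑ j, w₂ j · C (inr j) = ∑_{i=1}^{k} w₂ i · (∑_{j=1}^{i} p₂ j) + ∑_{j=1}^{k} w₂ j · (n − x j). -/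
/-
Split the completion time of an agent-2 job into the agent-1 jobs and the agent-2 jobs
scheduled no later than it. Agent-1 jobs have unit length, so they contribute their number,
`n - x j`; the agent-2 jobs are in index order, so those up to job `j` are exactly `Iic j`.
-/

open Finset

section Schedule

variable {α β : Type*} [Fintype α] [Fintype β]

theorem completionTime_sumElim (p : α → ℕ) (q : β → ℕ)
    (σ : α ⊕ β ≃ Fin (Fintype.card (α ⊕ β))) (i : α ⊕ β) :
    completionTime (Sum.elim p q) σ i
      = (∑ a ∈ univ.filter (fun a => σ (.inl a) ≤ σ i), p a)
        + ∑ b ∈ univ.filter (fun b => σ (.inr b) ≤ σ i), q b := by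
  simp only [completionTime, sum_filter, Fintype.sum_sum_type, Sum.elim_inl, Sum.elim_inr]

theorem card_filter_le_eq_card_sub_card_filter_lt {γ : Type*} [LinearOrder γ]
    (f : α → γ) (t : γ) :
    #(univ.filter (fun a => f a ≤ t)) = Fintype.card α - #(univ.filter (fun a => t < f a)) := by
  have hsplit := card_filter_add_card_filter_not (s := univ) (fun a => t < f a)
  simp only [not_lt, card_univ] at hsplit
  omega

theorem filter_strictMono_le_eq_Iic {γ δ : Type*} [LinearOrder γ] [Fintype γ]
    [LocallyFiniteOrderBot γ] [LinearOrder δ] {f : γ → δ} (hf : StrictMono f) (c : γ) :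
    univ.filter (fun b => f b ≤ f c) = Iic c := by
  simp only [hf.le_iff_le, filter_ge_eq_Iic]

end Schedule

theorem agent2_weighted_completion_formula_general
    (n k : ℕ) (p₂ w₂ : Fin k → ℕ) (x : Fin k → ℕ)
    (σ : (Fin n ⊕ Fin k) ≃ Fin (Fintype.card (Fin n ⊕ Fin k)))
    (h2 : ∀ j j' : Fin k, j < j' → σ (Sum.inr j) < σ (Sum.inr j'))
    (h3 : ∀ j : Fin k,
      (Finset.univ.filter (fun i : Fin n => σ (Sum.inr j) < σ (Sum.inl i))).card
        = x j) :
    ∑ j, w₂ j * completionTime (Sum.elim (fun _ => 1) p₂) σ (Sum.inr j)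
      = (∑ i : Fin k, w₂ i * ∑ j ∈ Finset.Iic i, p₂ j)
        + ∑ j : Fin k, w₂ j * (n - x j) := by
  have hmono : StrictMono (fun j : Fin k => σ (Sum.inr j)) := fun a b h => h2 a b h
  have hC : ∀ j, completionTime (Sum.elim (fun _ => 1) p₂) σ (Sum.inr j)
      = (∑ j' ∈ Iic j, p₂ j') + (n - x j) := by
    intro j
    rw [completionTime_sumElim, filter_strictMono_le_eq_Iic hmono, sum_const, smul_eq_mul,
      mul_one, card_filter_le_eq_card_sub_card_filter_lt, h3, Fintype.card_fin, add_comm]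
  simp only [hC, mul_add, sum_add_distrib]

/-- Correctness of constraint (8): in any schedule where each agent-1 job has
unit processing time, the agent-2 jobs (processing times `p₂`, weights `w₂`)
appear in index order, and exactly `x j` agent-1 jobs are scheduled after
agent-2 job `j`, the total weighted completion time of the agent-2 jobs equals
`∑_i w₂ i · (∑_{j ≤ i} p₂ j) + ∑_j w₂ j · (n - x j)`. -/
theorem agent2_weighted_completion_formula
    (n k : ℕ) (p₂ w₂ : Fin k → ℕ) (x : Fin k → ℕ) (hx : ∀ j, x j ≤ n)
    (σ : (Fin n ⊕ Fin k) ≃ Fin (Fintype.card (Fin n ⊕ Fin k)))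
    (h2 : ∀ j j' : Fin k, j < j' → σ (Sum.inr j) < σ (Sum.inr j'))
    (h3 : ∀ j : Fin k,
      (Finset.univ.filter (fun i : Fin n => σ (Sum.inr j) < σ (Sum.inl i))).card
        = x j) :
    ∑ j, w₂ j * completionTime (Sum.elim (fun _ => 1) p₂) σ (Sum.inr j)
      = (∑ i : Fin k, w₂ i * ∑ j ∈ Finset.Iic i, p₂ j)
        + ∑ j : Fin k, w₂ j * (n - x j) :=
  agent2_weighted_completion_formula_general n k p₂ w₂ x σ h2 h3
end

section
/- Let the agent-1 jobs have positive processing times p₁ : Fin n → ℕ, due dates d₁ : Fin n → ℕ, and weights w₁ : Fin n → ℕ, and let the agent-2 jobs have positive processing times p₂ : Fin k → ℕ, due dates d₂ : Fin k → ℕ, and weights w₂ : Fin k → ℕ; let A₁, A₂ : ℕ. If there exists a timed schedule with ∑ over just-in-time agent-1 jobs i of w₁ i ≥ A₁ and ∑ over tardy agent-2 jobs j of w₂ j ≤ A₂, then there exists such a timed schedule (satisfying both bounds) in which every agent-1 job that is not just-in-time and every tardy agent-2 job starts after the completion time of every just-in-time agent-1 job and of every early agent-2 job. -/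
/-!
Postpone every agent-1 job that is not just-in-time and every tardy agent-2 job, one after
another, to a point past all completion times and all due dates of the original schedule.
The remaining jobs keep their start times, so their status is unchanged, and each postponed
job now completes after its due date, so it is still not just-in-time, resp. still tardy.
Hence both weight bounds survive, and the postponed jobs start after all the others complete.
-/

/-- A timed schedule: a start-time function whose half-open execution intervals
`(s i, s i + p i]` are pairwise disjoint. -/
def IsTimedSchedule {ι : Type*} (p : ι → ℕ) (s : ι → ℕ) : Prop :=
  ∀ i j, i ≠ j →
    Disjoint (Set.Ioc (s i) (s i + p i)) (Set.Ioc (s j) (s j + p j))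

open Set

variable {ι : Type*}

namespace IsTimedSchedule

theorem piecewise {p s t : ι → ℕ} (hs : IsTimedSchedule p s) (ht : IsTimedSchedule p t)
    (R : Set ι) [DecidablePred (· ∈ R)] (hst : ∀ i ∉ R, ∀ j ∈ R, s i + p i ≤ t j) :
    IsTimedSchedule p (R.piecewise t s) := by
  intro i j hij
  by_cases hi : i ∈ R <;> by_cases hj : j ∈ R <;>
    simp only [piecewise_eq_of_mem, piecewise_eq_of_notMem, hi, hj, not_false_eq_true]
  · exact ht i j hij
  · exact (Ioc_disjoint_Ioc_of_le (hst j hj i hi)).symm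
  · exact Ioc_disjoint_Ioc_of_le (hst i hi j hj)
  · exact hs i j hij

theorem exists_forall_le [Finite ι] (p : ι → ℕ) (B : ℕ) :
    ∃ t, IsTimedSchedule p t ∧ ∀ i, B ≤ t i := by
  obtain ⟨e, he⟩ := Countable.exists_injective_nat ι
  obtain ⟨M, hM⟩ := Finite.exists_le p
  have hbefore : ∀ i j, e i < e j → B + e i * M + p i ≤ B + e j * M := fun i j h =>
    calc B + e i * M + p i ≤ B + (e i + 1) * M := by rw [add_one_mul]; linarith [hM i]
      _ ≤ B + e j * M := by gcongr; exact h
  refine ⟨fun i => B + e i * M, fun i j hij => ?_, fun i => Nat.le_add_right _ _⟩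
  rcases lt_or_gt_of_ne (he.ne hij) with h | h
  · exact Ioc_disjoint_Ioc_of_le (hbefore i j h)
  · exact (Ioc_disjoint_Ioc_of_le (hbefore j i h)).symm

theorem exists_postpone [Finite ι] {p s : ι → ℕ} (hs : IsTimedSchedule p s) (R : Set ι)
    {B : ℕ} (hB : ∀ i, s i + p i ≤ B) :
    ∃ s', IsTimedSchedule p s' ∧ EqOn s' s Rᶜ ∧ ∀ j ∈ R, B ≤ s' j := by
  classical
  obtain ⟨t, ht, hBt⟩ := exists_forall_le p B
  refine ⟨R.piecewise t s, hs.piecewise ht R fun i _ j _ => (hB i).trans (hBt j),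
    fun i hi => piecewise_eq_of_notMem R t s hi, fun j hj => ?_⟩
  rw [piecewise_eq_of_mem R t s hj]
  exact hBt j

end IsTimedSchedule

section TwoAgent

variable {n k : ℕ} (p₁ d₁ : Fin n → ℕ) (p₂ d₂ : Fin k → ℕ)

def IsDeferrable (s : Fin n ⊕ Fin k → ℕ) : Fin n ⊕ Fin k → Prop
  | .inl i => s (.inl i) + p₁ i ≠ d₁ i
  | .inr j => d₂ j < s (.inr j) + p₂ j

variable {p₁ d₁ p₂ d₂}

theorem isDeferrable_congr {s s' : Fin n ⊕ Fin k → ℕ} {x : Fin n ⊕ Fin k} (h : s' x = s x) :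
    IsDeferrable p₁ d₁ p₂ d₂ s' x ↔ IsDeferrable p₁ d₁ p₂ d₂ s x := by
  cases x <;> simp only [IsDeferrable, h]

theorem isDeferrable_of_lt {s : Fin n ⊕ Fin k → ℕ} {x : Fin n ⊕ Fin k}
    (h : Sum.elim d₁ d₂ x < s x + Sum.elim p₁ p₂ x) : IsDeferrable p₁ d₁ p₂ d₂ s x := by
  cases x with
  | inl i => exact h.ne'
  | inr j => exact h

theorem IsTimedSchedule.exists_postpone_deferrable {s : Fin n ⊕ Fin k → ℕ}
    (hs : IsTimedSchedule (Sum.elim p₁ p₂) s) :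
    ∃ s', IsTimedSchedule (Sum.elim p₁ p₂) s' ∧
      (∀ x, IsDeferrable p₁ d₁ p₂ d₂ s' x ↔ IsDeferrable p₁ d₁ p₂ d₂ s x) ∧
      ∀ x y, IsDeferrable p₁ d₁ p₂ d₂ s' x → ¬ IsDeferrable p₁ d₁ p₂ d₂ s' y →
        s' y + Sum.elim p₁ p₂ y ≤ s' x := by
  set q := Sum.elim p₁ p₂
  set R := {x | IsDeferrable p₁ d₁ p₂ d₂ s x}
  obtain ⟨M, hM⟩ := Finite.exists_le fun x => s x + q x + Sum.elim d₁ d₂ x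
  obtain ⟨s', hs', hfix, hlate⟩ :=
    hs.exists_postpone R (B := M + 1) fun x => by linarith [hM x]
  have hR : ∀ x, IsDeferrable p₁ d₁ p₂ d₂ s' x ↔ x ∈ R := fun x => by
    by_cases hx : x ∈ R
    · exact iff_of_true (isDeferrable_of_lt (by linarith [hM x, hlate x hx])) hx
    · exact isDeferrable_congr (hfix hx)
  refine ⟨s', hs', hR, fun x y hx hy => ?_⟩
  rw [hR] at hx hy
  rw [hfix hy]
  linarith [hM y, hlate x hx]

end TwoAgent

theorem jit_tardy_structural_lemma_general
    (n k : ℕ) (p₁ d₁ w₁ : Fin n → ℕ) (p₂ d₂ w₂ : Fin k → ℕ)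
    (A₁ A₂ : ℕ)
    (h : ∃ s : Fin n ⊕ Fin k → ℕ, IsTimedSchedule (Sum.elim p₁ p₂) s ∧
      A₁ ≤ (∑ i ∈ Finset.univ.filter
        (fun i : Fin n => s (Sum.inl i) + p₁ i = d₁ i), w₁ i) ∧
      (∑ j ∈ Finset.univ.filter
        (fun j : Fin k => d₂ j < s (Sum.inr j) + p₂ j), w₂ j) ≤ A₂) :
    ∃ s : Fin n ⊕ Fin k → ℕ, IsTimedSchedule (Sum.elim p₁ p₂) s ∧
      A₁ ≤ (∑ i ∈ Finset.univ.filter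
        (fun i : Fin n => s (Sum.inl i) + p₁ i = d₁ i), w₁ i) ∧
      (∑ j ∈ Finset.univ.filter
        (fun j : Fin k => d₂ j < s (Sum.inr j) + p₂ j), w₂ j) ≤ A₂ ∧
      -- every non-JIT agent-1 job starts after every JIT agent-1 job and
      -- every early agent-2 job
      (∀ i : Fin n, s (Sum.inl i) + p₁ i ≠ d₁ i →
        (∀ i' : Fin n, s (Sum.inl i') + p₁ i' = d₁ i' →
          s (Sum.inl i') + p₁ i' ≤ s (Sum.inl i)) ∧
        (∀ j' : Fin k, s (Sum.inr j') + p₂ j' ≤ d₂ j' →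
          s (Sum.inr j') + p₂ j' ≤ s (Sum.inl i))) ∧
      -- every tardy agent-2 job starts after every JIT agent-1 job and
      -- every early agent-2 job
      (∀ j : Fin k, d₂ j < s (Sum.inr j) + p₂ j →
        (∀ i' : Fin n, s (Sum.inl i') + p₁ i' = d₁ i' →
          s (Sum.inl i') + p₁ i' ≤ s (Sum.inr j)) ∧
        (∀ j' : Fin k, s (Sum.inr j') + p₂ j' ≤ d₂ j' →
          s (Sum.inr j') + p₂ j' ≤ s (Sum.inr j))) := by
  obtain ⟨s, hs, hA₁, hA₂⟩ := h
  obtain ⟨s', hs', hdef, hbefore⟩ := hs.exists_postpone_deferrable (d₁ := d₁) (d₂ := d₂)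
  have hafter : ∀ x, IsDeferrable p₁ d₁ p₂ d₂ s' x →
      (∀ i', s' (.inl i') + p₁ i' = d₁ i' → s' (.inl i') + p₁ i' ≤ s' x) ∧
      (∀ j', s' (.inr j') + p₂ j' ≤ d₂ j' → s' (.inr j') + p₂ j' ≤ s' x) := fun x hx =>
    ⟨fun i' hi' => hbefore x (.inl i') hx (not_not.2 hi'),
      fun j' hj' => hbefore x (.inr j') hx hj'.not_gt⟩
  refine ⟨s', hs', ?_, ?_, fun i => hafter (.inl i), fun j => hafter (.inr j)⟩
  · have hjit : ∀ i, s' (.inl i) + p₁ i = d₁ i ↔ s (.inl i) + p₁ i = d₁ i := fun i =>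
      not_iff_not.mp (hdef (.inl i))
    simpa only [hjit] using hA₁
  · have htardy : ∀ j, d₂ j < s' (.inr j) + p₂ j ↔ d₂ j < s (.inr j) + p₂ j := fun j =>
      hdef (.inr j)
    simpa only [htardy] using hA₂

/-- Structural part of Lemma 11 for
`1 | ∑ w_j^{(1)} E_j^{(1)} ≥ A₁, ∑ w_j^{(2)} U_j^{(2)} ≤ A₂ |`:
if a timed schedule exists with just-in-time agent-1 weight at least `A₁` and
tardy agent-2 weight at most `A₂`, then one exists (meeting both bounds) in
which every non-just-in-time agent-1 job and every tardy agent-2 job starts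
after the completion of every just-in-time agent-1 job and of every early
agent-2 job. -/
theorem jit_tardy_structural_lemma
    (n k : ℕ) (p₁ d₁ w₁ : Fin n → ℕ) (p₂ d₂ w₂ : Fin k → ℕ)
    (hp₁ : ∀ i, 0 < p₁ i) (hp₂ : ∀ j, 0 < p₂ j) (A₁ A₂ : ℕ)
    (h : ∃ s : Fin n ⊕ Fin k → ℕ, IsTimedSchedule (Sum.elim p₁ p₂) s ∧
      A₁ ≤ (∑ i ∈ Finset.univ.filter
        (fun i : Fin n => s (Sum.inl i) + p₁ i = d₁ i), w₁ i) ∧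
      (∑ j ∈ Finset.univ.filter
        (fun j : Fin k => d₂ j < s (Sum.inr j) + p₂ j), w₂ j) ≤ A₂) :
    ∃ s : Fin n ⊕ Fin k → ℕ, IsTimedSchedule (Sum.elim p₁ p₂) s ∧
      A₁ ≤ (∑ i ∈ Finset.univ.filter
        (fun i : Fin n => s (Sum.inl i) + p₁ i = d₁ i), w₁ i) ∧
      (∑ j ∈ Finset.univ.filter
        (fun j : Fin k => d₂ j < s (Sum.inr j) + p₂ j), w₂ j) ≤ A₂ ∧
      -- every non-JIT agent-1 job starts after every JIT agent-1 job and
      -- every early agent-2 job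
      (∀ i : Fin n, s (Sum.inl i) + p₁ i ≠ d₁ i →
        (∀ i' : Fin n, s (Sum.inl i') + p₁ i' = d₁ i' →
          s (Sum.inl i') + p₁ i' ≤ s (Sum.inl i)) ∧
        (∀ j' : Fin k, s (Sum.inr j') + p₂ j' ≤ d₂ j' →
          s (Sum.inr j') + p₂ j' ≤ s (Sum.inl i))) ∧
      -- every tardy agent-2 job starts after every JIT agent-1 job and
      -- every early agent-2 job
      (∀ j : Fin k, d₂ j < s (Sum.inr j) + p₂ j →
        (∀ i' : Fin n, s (Sum.inl i') + p₁ i' = d₁ i' →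
          s (Sum.inl i') + p₁ i' ≤ s (Sum.inr j)) ∧
        (∀ j' : Fin k, s (Sum.inr j') + p₂ j' ≤ d₂ j' →
          s (Sum.inr j') + p₂ j' ≤ s (Sum.inr j))) :=
  jit_tardy_structural_lemma_general n k p₁ d₁ w₁ p₂ d₂ w₂ A₁ A₂ h
end
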